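/- Let S be a finite nonempty set of positive integers, let π be a probability distribution on S, and let p ∈ [0,1]. Let f be a random S-map whose values f(i) are chosen independently so that with probability p the value f(i) is chosen from S according to π, and otherwise f(i) = 0. Then the probability that f has a cycle is exactly p, independently of π. -/

import Mathlib

open MeasureTheory

/-- A cycle of a map `f` relative to a set `S`: a sequence `a 0, …, a (k-1)` of
elements of `S` with `f (a i) = a (i+1)` for `i < k - 1` and `f (a (k-1)) = a 0`. -/
def HasCycle (S : Finset ℕ) (f : ℕ → ℕ) : Prop :=
  ∃ (k : ℕ) (a : ℕ → ℕ), 0 < k ∧ (∀ i < k, a i ∈ S) ∧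
    (∀ i, i + 1 < k → f (a i) = a (i + 1)) ∧ f (a (k - 1)) = a 0

/-!
Give every `t ∈ T ⊇ S` a weight `w t` and weigh a map `g : S → T` by `∏ i, w (g i)`. The
maps without a cycle then carry the weight `w(T \ S) · w(T) ^ (|S| - 1)`, by induction on `S`:
fix `v ∈ S` and split according to `u = g v`. If `u = v` there is a loop. If `u ≠ v`,
contracting `v` onto `u` (redirecting every arrow into `v` to `u`) preserves acyclicity and
leaves a map on `S \ {v}` weighted by the image of `w` under `v ↦ u`; that image has the same
total, and its weight outside `S \ {v}` exceeds `w(T \ S)` by `w v` exactly when `u ∉ S`.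

For the random `S`-map take `T = S ∪ {0}`, `w 0 = 1 - p` and `w j = p π j`, so that `w(T) = 1`
and the maps with a cycle carry the weight `w(S) = p`.
-/

open Function

theorem hasCycle_iff_exists_mapsTo {S : Finset ℕ} {f : ℕ → ℕ} :
    HasCycle S f ↔ ∃ C ⊆ (S : Set ℕ), C.Nonempty ∧ Set.MapsTo f C C := by
  constructor
  · rintro ⟨k, a, hk, hmem, hstep, hlast⟩
    refine ⟨a '' Set.Iio k, Set.image_subset_iff.2 hmem, ⟨a 0, 0, hk, rfl⟩, ?_⟩
    rintro _ ⟨i, hi, rfl⟩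
    by_cases hik : i + 1 < k
    · exact ⟨i + 1, hik, (hstep i hik).symm⟩
    · obtain rfl : i = k - 1 := by simp only [Set.mem_Iio] at hi; omega
      exact ⟨0, hk, hlast.symm⟩
  · rintro ⟨C, hCS, ⟨x, hx⟩, hC⟩
    -- the orbit of `x` stays in the finite set `C`, so it repeats
    obtain ⟨m, n, hmn, hrep⟩ := (S.finite_toSet.subset hCS).exists_lt_map_eq_of_forall_mem
      (f := fun n => f^[n] x) fun n => hC.iterate n hx
    refine ⟨n - m, fun j => f^[m + j] x, by omega, fun j _ => hCS (hC.iterate _ hx), ?_, ?_⟩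
    · intro j _
      exact (iterate_succ_apply' f (m + j) x).symm
    · rw [← iterate_succ_apply' f, show (m + (n - m - 1)).succ = n by omega]
      exact hrep.symm

theorem hasCycle_congr {S : Finset ℕ} {f g : ℕ → ℕ} (hfg : ∀ i ∈ S, f i = g i) :
    HasCycle S f ↔ HasCycle S g := by
  constructor <;> rintro ⟨k, a, hk, hmem, hstep, hlast⟩
  · exact ⟨k, a, hk, hmem, fun i hi => (hfg _ (hmem i (by omega))).symm.trans (hstep i hi),
      (hfg _ (hmem _ (by omega))).symm.trans hlast⟩
  · exact ⟨k, a, hk, hmem, fun i hi => (hfg _ (hmem i (by omega))).trans (hstep i hi),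
      (hfg _ (hmem _ (by omega))).trans hlast⟩

theorem HasCycle.of_apply_eq_self {S : Finset ℕ} {f : ℕ → ℕ} {v : ℕ} (hv : v ∈ S)
    (hfv : f v = v) : HasCycle S f :=
  ⟨1, fun _ => v, one_pos, fun _ _ => hv, fun _ _ => by omega, hfv⟩

theorem not_hasCycle_empty (f : ℕ → ℕ) : ¬ HasCycle ∅ f := by
  rintro ⟨k, a, hk, hmem, -⟩
  exact Finset.notMem_empty _ (hmem 0 hk)

theorem hasCycle_insert_iff {S : Finset ℕ} {v u : ℕ} (hv : v ∉ S) (huv : u ≠ v)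
    {f : ℕ → ℕ} (hfv : f v = u) :
    HasCycle (insert v S) f ↔ HasCycle S (update id v u ∘ f) := by
  simp only [hasCycle_iff_exists_mapsTo, Finset.coe_insert]
  constructor
  · rintro ⟨C, hCS, ⟨x, hx⟩, hC⟩
    have hu : v ∈ C → u ∈ C := fun h => hfv ▸ hC h
    refine ⟨C \ {v}, fun y hy => (hCS hy.1).resolve_left hy.2, ?_, ?_⟩
    · by_cases hxv : x = v
      · exact ⟨u, hu (hxv ▸ hx), huv⟩
      · exact ⟨x, hx, hxv⟩
    · rintro y ⟨hy, -⟩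
      simp only [comp_apply, update_apply, id]
      split_ifs with hfy
      · exact ⟨hu (hfy ▸ hC hy), huv⟩
      · exact ⟨hC hy, hfy⟩
  · rintro ⟨C, hCS, hne, hC⟩
    by_cases huC : u ∈ C
    · refine ⟨insert v C, Set.insert_subset_insert hCS, hne.mono (Set.subset_insert _ _), ?_⟩
      rintro y (rfl | hy)
      · exact Or.inr (hfv ▸ huC)
      · have := hC hy
        simp only [comp_apply, update_apply, id] at this
        split_ifs at this with hfy
        · exact Or.inl hfy
        · exact Or.inr this
    · refine ⟨C, hCS.trans (Set.subset_insert _ _), hne, fun y hy => ?_⟩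
      have := hC hy
      simp only [comp_apply, update_apply, id] at this
      split_ifs at this with hfy
      · exact absurd this huC
      · exact this

open Finset

open scoped Classical

/-- Maps `S → T`, extended by `0` outside `S`. -/
noncomputable def extMaps (S T : Finset ℕ) : Finset (ℕ → ℕ) :=
  (S.pi fun _ => T).image fun γ i => if h : i ∈ S then γ i h else 0

theorem mem_extMaps {S T : Finset ℕ} {g : ℕ → ℕ} :
    g ∈ extMaps S T ↔ (∀ i ∈ S, g i ∈ T) ∧ ∀ i ∉ S, g i = 0 := by
  simp only [extMaps, mem_image, mem_pi]
  constructor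
  · rintro ⟨γ, hγ, rfl⟩
    exact ⟨fun i hi => by simpa [hi] using hγ i hi, fun i hi => by simp [hi]⟩
  · rintro ⟨hT, h0⟩
    refine ⟨fun i _ => g i, hT, funext fun i => ?_⟩
    by_cases hi : i ∈ S <;> simp [hi, h0]

theorem extMaps_empty (T : Finset ℕ) : extMaps ∅ T = {0} := by
  ext g
  simp [mem_extMaps, funext_iff]

theorem extMaps_insert {S T : Finset ℕ} {v : ℕ} (hv : v ∉ S) :
    extMaps (insert v S) T = (T ×ˢ extMaps S T).image fun p => update p.2 v p.1 := by
  ext g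
  simp only [mem_image, mem_product, mem_extMaps, Prod.exists, mem_insert]
  constructor
  · rintro ⟨hT, h0⟩
    refine ⟨g v, update g v 0, ⟨hT v (Or.inl rfl), fun i hi => ?_, fun i hi => ?_⟩, by simp⟩
    · rw [update_of_ne (ne_of_mem_of_not_mem hi hv)]
      exact hT i (Or.inr hi)
    · rcases eq_or_ne i v with rfl | hiv
      · simp
      · rw [update_of_ne hiv]
        exact h0 i (by tauto)
  · rintro ⟨u, h, ⟨hu, hT, h0⟩, rfl⟩
    refine ⟨fun i hi => ?_, fun i hi => ?_⟩
    · rcases eq_or_ne i v with rfl | hiv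
      · simpa
      · rw [update_of_ne hiv]
        exact hT i (hi.resolve_left hiv)
    · rw [update_of_ne (by tauto)]
      exact h0 i (by tauto)

section Semiring

variable {α β R : Type*} [CommSemiring R]

def pushWeight [DecidableEq β] (σ : α → β) (T : Finset α) (w : α → R) (y : β) : R :=
  ∑ x ∈ T with σ x = y, w x

theorem sum_pushWeight_mul [DecidableEq β] {σ : α → β} {T : Finset α} {T' : Finset β}
    (hσ : ∀ x ∈ T, σ x ∈ T') (w : α → R) (G : β → R) :
    ∑ y ∈ T', pushWeight σ T w y * G y = ∑ x ∈ T, w x * G (σ x) := by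
  simp_rw [pushWeight, sum_mul]
  rw [← sum_fiberwise_of_maps_to hσ]
  refine sum_congr rfl fun y _ => sum_congr rfl fun x hx => ?_
  rw [(mem_filter.1 hx).2]

theorem sum_filter_pushWeight [DecidableEq β] {σ : α → β} {T : Finset α} {T' : Finset β}
    (hσ : ∀ x ∈ T, σ x ∈ T') (w : α → R) (p : β → Prop) [DecidablePred p] :
    ∑ y ∈ T' with p y, pushWeight σ T w y = ∑ x ∈ T with p (σ x), w x := by
  simpa only [mul_ite, mul_one, mul_zero, ← sum_filter] using
    sum_pushWeight_mul hσ w fun y => if p y then 1 else 0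

theorem sum_extMaps_insert {S T : Finset ℕ} {v : ℕ} (hv : v ∉ S) (w : ℕ → R)
    (φ : (ℕ → ℕ) → R) :
    ∑ g ∈ extMaps (insert v S) T, φ g * ∏ i ∈ insert v S, w (g i)
      = ∑ u ∈ T, w u * ∑ h ∈ extMaps S T, φ (update h v u) * ∏ i ∈ S, w (h i) := by
  rw [extMaps_insert hv, sum_image, sum_product]
  · refine sum_congr rfl fun u _ => ?_
    rw [mul_sum]
    refine sum_congr rfl fun h _ => ?_
    rw [prod_insert hv, update_self]
    rw [prod_congr rfl fun i hi => by rw [update_of_ne (ne_of_mem_of_not_mem hi hv)]]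
    ring
  · rintro ⟨u, h⟩ hp ⟨u', h'⟩ hp' heq
    simp only [coe_product, Set.mem_prod, mem_coe, mem_extMaps] at hp hp'
    refine Prod.ext (by simpa using congr_fun heq v) (funext fun i => ?_)
    rcases eq_or_ne i v with rfl | hiv
    · exact (hp.2.2 i hv).trans (hp'.2.2 i hv).symm
    · simpa [hiv] using congr_fun heq i

theorem sum_extMaps_prod (S T : Finset ℕ) (w : ℕ → R) :
    ∑ g ∈ extMaps S T, ∏ i ∈ S, w (g i) = (∑ t ∈ T, w t) ^ #S := by
  induction S using Finset.induction_on with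
  | empty => simp [extMaps_empty]
  | insert v S hv ih =>
    simpa [← sum_mul, ih, card_insert_of_notMem hv, pow_succ, mul_comm] using
      sum_extMaps_insert hv w (T := T) fun _ => 1

theorem sum_extMaps_comp {T T' : Finset ℕ} {σ : ℕ → ℕ} (hσ0 : σ 0 = 0)
    (hσ : ∀ x ∈ T, σ x ∈ T') (w : ℕ → R) (S : Finset ℕ) (φ : (ℕ → ℕ) → R) :
    ∑ h ∈ extMaps S T, φ (σ ∘ h) * ∏ i ∈ S, w (h i)
      = ∑ g ∈ extMaps S T', φ g * ∏ i ∈ S, pushWeight σ T w (g i) := by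
  induction S using Finset.induction_on generalizing φ with
  | empty =>
    have : σ ∘ (0 : ℕ → ℕ) = 0 := funext fun _ => hσ0
    simp [extMaps_empty, this]
  | insert v S hv ih =>
    rw [sum_extMaps_insert hv w fun h => φ (σ ∘ h), sum_extMaps_insert hv]
    simp only [comp_update]
    rw [sum_pushWeight_mul hσ w fun y => ∑ g ∈ extMaps S T', φ (update g v y) *
      ∏ i ∈ S, pushWeight σ T w (g i)]
    exact sum_congr rfl fun x _ => by rw [ih fun g => φ (update g v (σ x))]

theorem update_id_mem {T : Finset ℕ} {v u x : ℕ} (hu : u ∈ T) (hx : x ∈ T) :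
    update id v u x ∈ T := by
  rw [update_apply]
  split_ifs
  exacts [hu, hx]

theorem sum_pushWeight_update_id {T : Finset ℕ} {v u : ℕ} (hu : u ∈ T) (w : ℕ → R) :
    ∑ t ∈ T, pushWeight (update id v u) T w t = ∑ t ∈ T, w t := by
  simpa using sum_filter_pushWeight (fun _ => update_id_mem hu) w fun _ => True

theorem sum_sdiff_pushWeight_update_id {S T : Finset ℕ} {v u : ℕ} (hv : v ∈ T) (hu : u ∈ T)
    (w : ℕ → R) :
    ∑ t ∈ T \ S, pushWeight (update id v u) T w t
      = ∑ t ∈ T \ insert v S, w t + if u ∈ S then 0 else w v := by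
  rw [sdiff_eq_filter, sum_filter_pushWeight (fun _ => update_id_mem hu), sum_filter,
    ← add_sum_erase T _ hv, sdiff_eq_filter, sum_filter, ← add_sum_erase T _ hv, update_self,
    if_neg (not_not.2 (mem_insert_self v S)), zero_add, add_comm, ite_not]
  congr 1
  exact sum_congr rfl fun x hx => by simp [ne_of_mem_erase hx]

noncomputable def acyclicWeight (S T : Finset ℕ) (w : ℕ → R) : R :=
  ∑ g ∈ extMaps S T with ¬HasCycle S g, ∏ i ∈ S, w (g i)

theorem acyclicWeight_insert {S T : Finset ℕ} {v : ℕ} (hv : v ∉ S) (hv0 : v ≠ 0)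
    (w : ℕ → R) :
    acyclicWeight (insert v S) T w
      = ∑ u ∈ T.erase v, w u * acyclicWeight S T (pushWeight (update id v u) T w) := by
  have hsplit := sum_extMaps_insert hv w (T := T)
    fun g => if HasCycle (insert v S) g then 0 else 1
  simp only [ite_mul, zero_mul, one_mul] at hsplit
  rw [acyclicWeight, sum_filter]
  simp only [ite_not]
  rw [hsplit, ← sum_erase T (a := v) (by simp [HasCycle.of_apply_eq_self (mem_insert_self v S)])]
  refine sum_congr rfl fun u hu => ?_
  obtain ⟨huv, huT⟩ := mem_erase.1 hu
  have hcontract := sum_extMaps_comp (update_of_ne hv0.symm u id) (fun _ => update_id_mem huT)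
    w S fun g => if HasCycle S g then 0 else 1
  simp only [ite_mul, zero_mul, one_mul] at hcontract
  rw [acyclicWeight, sum_filter]
  simp only [ite_not]
  rw [← hcontract]
  refine congrArg _ (sum_congr rfl fun h _ => ?_)
  rw [hasCycle_insert_iff hv huv (update_self v u h),
    hasCycle_congr fun i hi => by rw [comp_apply, update_of_ne (ne_of_mem_of_not_mem hi hv)]]
  rfl

end Semiring

section Ring

variable {R : Type*} [CommRing R]

theorem acyclicWeight_mul_sum {S T : Finset ℕ} (hST : S ⊆ T) (h0 : 0 ∉ S) (w : ℕ → R) :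
    acyclicWeight S T w * ∑ t ∈ T, w t = (∑ t ∈ T \ S, w t) * (∑ t ∈ T, w t) ^ #S := by
  induction S using Finset.induction_on generalizing w with
  | empty => simp [acyclicWeight, extMaps_empty, not_hasCycle_empty]
  | insert v S hv ih =>
    have hvT : v ∈ T := hST (mem_insert_self v S)
    have hstep : ∀ u ∈ T.erase v,
        w u * acyclicWeight S T (pushWeight (update id v u) T w) * ∑ t ∈ T, w t
          = ((∑ t ∈ T \ insert v S, w t) * w u + w v * if u ∈ S then 0 else w u) *
            (∑ t ∈ T, w t) ^ #S := by
      intro u hu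
      have huT := mem_of_mem_erase hu
      rw [mul_assoc, ← sum_pushWeight_update_id huT (v := v),
        ih (fun x hx => hST (mem_insert_of_mem hx)) (fun h => h0 (mem_insert_of_mem h)),
        sum_pushWeight_update_id huT, sum_sdiff_pushWeight_update_id hvT huT]
      split_ifs <;> ring
    have houtside :
        ∑ u ∈ T.erase v, (if u ∈ S then 0 else w u) = ∑ t ∈ T \ insert v S, w t := by
      rw [sdiff_insert, ← erase_sdiff_comm, sdiff_eq_filter, sum_filter]
      simp only [ite_not]
    rw [acyclicWeight_insert hv (ne_of_mem_of_not_mem (mem_insert_self v S) h0), sum_mul,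
      sum_congr rfl hstep, ← sum_mul, sum_add_distrib, ← mul_sum, ← mul_sum, houtside,
      sum_erase_eq_sub hvT, card_insert_of_notMem hv]
    ring

theorem sum_extMaps_hasCycle_mul {S T : Finset ℕ} (hST : S ⊆ T) (h0 : 0 ∉ S) (w : ℕ → R) :
    (∑ g ∈ extMaps S T with HasCycle S g, ∏ i ∈ S, w (g i)) * ∑ t ∈ T, w t
      = (∑ t ∈ S, w t) * (∑ t ∈ T, w t) ^ #S := by
  have htotal := sum_filter_add_sum_filter_not (extMaps S T) (HasCycle S)
    fun g => ∏ i ∈ S, w (g i)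
  rw [sum_extMaps_prod, ← acyclicWeight] at htotal
  rw [eq_sub_of_add_eq htotal, sub_mul, acyclicWeight_mul_sum hST h0, ← sum_sdiff hST (f := w)]
  ring

end Ring

section Probability

open ProbabilityTheory

variable {Ω : Type*} [MeasurableSpace Ω]

theorem measure_setOf_eq_sum_extMaps (μ : Measure Ω) {S T : Finset ℕ} {F : Ω → ℕ → ℕ}
    (hT : ∀ ω, ∀ i ∈ S, F ω i ∈ T) (hmeas : ∀ i ∈ S, Measurable fun ω => F ω i)
    (hindep : iIndepFun (fun (i : S) ω => F ω i) μ) {P : (ℕ → ℕ) → Prop}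
    (hP : ∀ f g, (∀ i ∈ S, f i = g i) → (P f ↔ P g)) :
    μ {ω | P (F ω)} = ∑ g ∈ extMaps S T with P g, ∏ i ∈ S, μ {ω | F ω i = g i} := by
  set atom : (ℕ → ℕ) → Set Ω := fun g => ⋂ i ∈ S, {ω | F ω i = g i}
  have hrestrict :
      ∀ ω, S.piecewise (F ω) 0 ∈ extMaps S T ∧ ω ∈ atom (S.piecewise (F ω) 0) :=
    fun ω => ⟨mem_extMaps.2 ⟨fun i hi => by simpa [hi] using hT ω i hi,
      fun i hi => by simp [hi]⟩, by simp +contextual [atom]⟩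
  have hunion : {ω | P (F ω)} = ⋃ g ∈ (extMaps S T).filter P, atom g := by
    ext ω
    simp only [Set.mem_ofPred_eq, Set.mem_iUnion, mem_filter, exists_prop]
    refine ⟨fun h => ⟨_, ⟨(hrestrict ω).1, ?_⟩, (hrestrict ω).2⟩, ?_⟩
    · exact (hP _ _ fun i hi => by simp [hi]).1 h
    · rintro ⟨g, ⟨-, hg⟩, hω⟩
      exact (hP _ _ fun i hi => by simpa [atom] using Set.mem_iInter₂.1 hω i hi).2 hg
  have hdisj : (extMaps S T : Set (ℕ → ℕ)).PairwiseDisjoint atom := by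
    intro g hg g' hg' hne
    refine Set.disjoint_left.2 fun ω hω hω' => hne (funext fun i => ?_)
    by_cases hi : i ∈ S
    · simp only [atom, Set.mem_iInter₂, Set.mem_ofPred_eq] at hω hω'
      rw [← hω i hi, hω' i hi]
    · rw [(mem_extMaps.1 hg).2 i hi, (mem_extMaps.1 hg').2 i hi]
  have hatom : ∀ g, μ (atom g) = ∏ i ∈ S, μ {ω | F ω i = g i} := by
    intro g
    have := hindep.measure_inter_preimage_eq_mul univ (sets := fun i => {g i})
      fun _ _ => measurableSet_singleton _
    simp only [mem_univ, Set.iInter_true] at this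
    rw [← prod_coe_sort S fun i => μ {ω | F ω i = g i}]
    exact (congrArg μ (by ext ω; simp [atom])).trans this
  rw [hunion, measure_biUnion_finset (hdisj.subset (coe_subset.2 (filter_subset _ _)))
    fun g _ => measurableSet_biInter S fun i hi => hmeas i hi (measurableSet_singleton _)]
  exact sum_congr rfl fun g _ => hatom g

end Probability

theorem cycle_prob_range_weighted_general
    (S : Finset ℕ) (hpos : ∀ i ∈ S, 0 < i)
    (π : ℕ → ℝ) (hπ1 : ∑ i ∈ S, π i = 1)
    (p : ℝ)
    {Ω : Type*} [MeasurableSpace Ω] (μ : Measure Ω) [IsProbabilityMeasure μ]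
    (F : Ω → ℕ → ℕ)
    (hSmap : ∀ ω, ∀ i ∈ S, F ω i ∈ S ∨ F ω i = 0)
    (hmeas : ∀ i ∈ S, Measurable fun ω => F ω i)
    (hindep : ProbabilityTheory.iIndepFun
      (fun (i : {i // i ∈ S}) ω => F ω i.val) μ)
    (hzero : ∀ i ∈ S, (μ {ω | F ω i = 0}).toReal = 1 - p)
    (hval : ∀ i ∈ S, ∀ j ∈ S, (μ {ω | F ω i = j}).toReal = p * π j) :
    (μ {ω | HasCycle S (F ω)}).toReal = p := by
  have h0 : 0 ∉ S := fun h => (hpos 0 h).false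
  set w : ℕ → ℝ := fun j => if j = 0 then 1 - p else p * π j
  have hlaw : ∀ i ∈ S, ∀ j ∈ insert 0 S, (μ {ω | F ω i = j}).toReal = w j := by
    rintro i hi j hj
    rcases mem_insert.1 hj with rfl | hjS
    · simp [w, hzero i hi]
    · simp [w, ne_of_mem_of_not_mem hjS h0, hval i hi j hjS]
  have hwS : ∑ t ∈ S, w t = p := by
    rw [sum_congr rfl fun t ht => if_neg (ne_of_mem_of_not_mem ht h0), ← mul_sum, hπ1, mul_one]
  have hwT : ∑ t ∈ insert 0 S, w t = 1 := by
    rw [sum_insert h0, hwS]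
    simp [w]
  have key := sum_extMaps_hasCycle_mul (subset_insert 0 S) h0 w
  rw [hwS, hwT, one_pow, mul_one, mul_one] at key
  rw [measure_setOf_eq_sum_extMaps μ (fun ω i hi => mem_insert.2 (hSmap ω i hi).symm) hmeas
    hindep fun _ _ => hasCycle_congr, ENNReal.toReal_sum fun _ _ =>
      ENNReal.prod_ne_top fun _ _ => measure_ne_top μ _, ← key]
  refine sum_congr rfl fun g hg => ?_
  rw [ENNReal.toReal_prod]
  exact prod_congr rfl fun i hi => hlaw i hi (g i) ((mem_extMaps.1 (mem_filter.1 hg).1).1 i hi)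

/-- Let `S` be a finite nonempty set of positive integers, `π` a probability
distribution on `S`, and `p ∈ [0,1]`.  Let `F` be a random `S`-map whose values are
independent, with `F i` distributed according to `π` with probability `p` and equal
to `0` otherwise (so `P[F i = j] = p * π j` for `j ∈ S` and `P[F i = 0] = 1 - p`).
Then the probability that `F` has a cycle is exactly `p`, independently of `π`. -/
theorem cycle_prob_range_weighted
    (S : Finset ℕ) (hS : S.Nonempty) (hpos : ∀ i ∈ S, 0 < i)
    (π : ℕ → ℝ) (hπ0 : ∀ i ∈ S, 0 ≤ π i) (hπ1 : ∑ i ∈ S, π i = 1)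
    (p : ℝ) (hp0 : 0 ≤ p) (hp1 : p ≤ 1)
    {Ω : Type*} [MeasurableSpace Ω] (μ : Measure Ω) [IsProbabilityMeasure μ]
    (F : Ω → ℕ → ℕ)
    (hSmap : ∀ ω, ∀ i ∈ S, F ω i ∈ S ∨ F ω i = 0)
    (hmeas : ∀ i ∈ S, Measurable fun ω => F ω i)
    (hindep : ProbabilityTheory.iIndepFun
      (fun (i : {i // i ∈ S}) ω => F ω i.val) μ)
    (hzero : ∀ i ∈ S, (μ {ω | F ω i = 0}).toReal = 1 - p)
    (hval : ∀ i ∈ S, ∀ j ∈ S, (μ {ω | F ω i = j}).toReal = p * π j) :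
    (μ {ω | HasCycle S (F ω)}).toReal = p :=
  cycle_prob_range_weighted_general S hpos π hπ1 p μ F hSmap hmeas hindep hzero hval
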